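/- Under Assumption 1, the map H : ℝ^n → X_c defined by H(x) = s if and only if x ∈ s (well defined because X_c is a partition of ℝ^n) is a feedback refinement relation from the concrete system S = (ℝ^n, 𝒰, F) to the composed abstraction S_c, i.e., for all x ∈ ℝ^n with s = H(x): U_c(s) ⊆ U(x), and for all u ∈ U_c(s), H(δ(x,u)) ⊆ δ_c(s,u). -/

import Mathlib

open Set Function

/-- `ℝⁿ` modeled as `Fin n → ℝ`. -/
abbrev Vec (n : ℕ) : Type := Fin n → ℝ

/-- Projection `π_{I'}` of a dependent tuple onto the components with indices in `I'`. -/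
def proj {ι : Type*} (E : ι → Type*) (I' : Set ι) (x : (i : ι) → E i) : (i : I') → E i.1 :=
  fun i => x i.1

/-- `P` is a finite partition of `A`: finitely many nonempty pairwise disjoint cells covering `A`. -/
def IsFinPartition {α : Type*} (P : Set (Set α)) (A : Set α) : Prop :=
  P.Finite ∧ (∀ s ∈ P, s.Nonempty) ∧ ⋃₀ P = A ∧
    ∀ s ∈ P, ∀ t ∈ P, s ≠ t → Disjoint s t

/-- The family `A : τ → Set α` is a partition of the index type `α`. -/
def IsIndexPartition {τ α : Type*} (A : τ → Set α) : Prop :=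
  (⋃ σ, A σ) = Set.univ ∧ Pairwise (Disjoint on A)

/-- The set `𝒫` of cells `s₁ × ⋯ × s_n̄`, `s_i ∈ 𝒫_i`, of the product partition. -/
def cells {ι : Type*} {E : ι → Type*} (P : (i : ι) → Set (Set (E i))) :
    Set (Set ((i : ι) → E i)) :=
  { s | ∃ f : (i : ι) → Set (E i), (∀ i, f i ∈ P i) ∧ s = Set.pi Set.univ f }

/-- The set `X_σ⁰` of cells `∏_{i ∈ I'} s_i`, `s_i ∈ 𝒫_i`, of the partition restricted to `I'`. -/
def cellsOn {ι : Type*} {E : ι → Type*} (P : (i : ι) → Set (Set (E i))) (I' : Set ι) :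
    Set (Set ((i : I') → E i.1)) :=
  { s | ∃ f : (i : ι) → Set (E i), (∀ i, f i ∈ P i) ∧
        s = Set.pi Set.univ (fun i : I' => f i.1) }

/-- `F(𝒳',𝒰') = ⋃_{x ∈ 𝒳', u ∈ 𝒰'} F(x,u)`. -/
def Fset {X U : Type*} (F : X → U → Set X) (A : Set X) (B : Set U) : Set X :=
  ⋃ x ∈ A, ⋃ u ∈ B, F x u

/-- `Φ_σ(s_σ,u_σ) = F̄(𝒳 ∩ π_{I_σ}⁻¹(s_σ), 𝒰 ∩ π_{J_σ}⁻¹({u_σ}))`. -/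
def Phi {ι κ : Type*} (E : ι → Type*) (Fu : κ → Type*)
    (Fbar : Set ((i : ι) → E i) → Set ((j : κ) → Fu j) → Set ((i : ι) → E i))
    (Xset : Set ((i : ι) → E i)) (Uset : Set ((j : κ) → Fu j))
    (Iσ : Set ι) (Jσ : Set κ)
    (sσ : Set ((i : Iσ) → E i.1)) (uσ : (j : Jσ) → Fu j.1) : Set ((i : ι) → E i) :=
  Fbar (Xset ∩ proj E Iσ ⁻¹' sσ) (Uset ∩ proj Fu Jσ ⁻¹' {uσ})

/-- `Out_σ = π_{I_σ}(ℝⁿ) \ 𝒳_{I_σ}`. -/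
def OutOf {ι : Type*} (E : ι → Type*) (Iσ : Set ι) (Xset : Set ((i : ι) → E i)) :
    Set ((i : Iσ) → E i.1) :=
  proj E Iσ '' Set.univ \ proj E Iσ '' Xset

/-- Transition map `δ_σ` of the symbolic subsystem `S_σ`. -/
def deltaSub {ι κ : Type*} (E : ι → Type*) (Fu : κ → Type*)
    (Fbar : Set ((i : ι) → E i) → Set ((j : κ) → Fu j) → Set ((i : ι) → E i))
    (Xset : Set ((i : ι) → E i)) (Uset : Set ((j : κ) → Fu j))
    (P : (i : ι) → Set (Set (E i))) (V : (j : κ) → Set (Fu j))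
    (Iσ Icσ : Set ι) (Jσ : Set κ)
    (sσ : Set ((i : Iσ) → E i.1)) (uσ : (j : Jσ) → Fu j.1) :
    Set (Set ((i : Iσ) → E i.1)) :=
  { s' | sσ ∈ cellsOn P Iσ ∧ uσ ∈ Set.pi Set.univ (fun j : Jσ => V j.1) ∧
      ((s' ∈ cellsOn P Iσ ∧
          (s' ∩ proj E Iσ '' Phi E Fu Fbar Xset Uset Iσ Jσ sσ uσ).Nonempty) ∨
        (s' = OutOf E Iσ Xset ∧
          (proj E Iσ '' Phi E Fu Fbar Xset Uset Iσ Jσ sσ uσ ∩ proj E Iσ '' Xset = ∅ ∨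
            ¬proj E Icσ '' Phi E Fu Fbar Xset Uset Iσ Jσ sσ uσ ⊆ proj E Icσ '' Xset))) }

/-- Transition map `δ_c` of the composed abstraction `S_c`. -/
def deltaC {ι κ τ : Type*} (E : ι → Type*) (Fu : κ → Type*)
    (Fbar : Set ((i : ι) → E i) → Set ((j : κ) → Fu j) → Set ((i : ι) → E i))
    (Xset : Set ((i : ι) → E i)) (Uset : Set ((j : κ) → Fu j))
    (P : (i : ι) → Set (Set (E i))) (V : (j : κ) → Set (Fu j))
    (Im Ic : τ → Set ι) (Jm : τ → Set κ)
    (s : Set ((i : ι) → E i)) (u : (j : κ) → Fu j) :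
    Set (Set ((i : ι) → E i)) :=
  { s' | s ∈ cells P ∧ u ∈ Set.pi Set.univ V ∧
      ((s' ∈ cells P ∧ ∀ σ : τ,
          proj E (Im σ) '' s' ∈
            deltaSub E Fu Fbar Xset Uset P V (Im σ) (Ic σ) (Jm σ)
              (proj E (Im σ) '' s) (proj Fu (Jm σ) u)) ∨
        (s' = Xsetᶜ ∧ ∃ σ : τ,
          OutOf E (Im σ) Xset ∈
            deltaSub E Fu Fbar Xset Uset P V (Im σ) (Ic σ) (Jm σ)
              (proj E (Im σ) '' s) (proj Fu (Jm σ) u))) }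

/-- Safety controller for the transition map `δ` and the safe set `safe`. -/
def IsSafetyController {X U : Type*} (δ : X → U → Set X) (safe : Set X) (C : X → Set U) : Prop :=
  (∀ x, ∀ u ∈ C x, (δ x u).Nonempty) ∧
  (∀ x, (C x).Nonempty → x ∈ safe) ∧
  (∀ x, ∀ u ∈ C x, ∀ x', x' ∈ δ x u → (C x').Nonempty)

/-- Maximal safety controller. -/
def IsMaximalSafetyController {X U : Type*} (δ : X → U → Set X) (safe : Set X)
    (Cstar : X → Set U) : Prop :=
  IsSafetyController δ safe Cstar ∧
    ∀ C, IsSafetyController δ safe C → ∀ x, C x ⊆ Cstar x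

/-- Feedback refinement relation (over a common input type). -/
def IsFeedbackRefinement {Xa Xb U : Type*} (δa : Xa → U → Set Xa) (δb : Xb → U → Set Xb)
    (H : Xa → Xb) : Prop :=
  ∀ xa : Xa,
    (∀ u, (δb (H xa) u).Nonempty → (δa xa u).Nonempty) ∧
    (∀ u, (δb (H xa) u).Nonempty → H '' δa xa u ⊆ δb (H xa) u)

/-- Concrete transition map of `S = (ℝⁿ, 𝒰, F)` (inputs restricted to `𝒰`). -/
def deltaConc {X U : Type*} (F : X → U → Set X) (Uset : Set U) (x : X) (u : U) : Set X :=
  { x' | u ∈ Uset ∧ x' ∈ F x u }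

section

variable {ι κ : Type*} {E : ι → Type*} {Fu : κ → Type*}

lemma proj_image_univ_pi (I' : Set ι) {f : (i : ι) → Set (E i)} (hf : ∀ i, (f i).Nonempty) :
    proj E I' '' pi univ f = pi univ (fun i : I' => f i.1) := by
  classical
  ext y
  constructor
  · rintro ⟨x, hx, rfl⟩ i _
    exact hx i.1 trivial
  · intro hy
    choose g hg using hf
    refine ⟨fun i => if h : i ∈ I' then y ⟨i, h⟩ else g i, fun i _ => ?_, ?_⟩
    · by_cases h : i ∈ I'
      · simpa [h] using hy ⟨i, h⟩ trivial
      · simpa [h] using hg i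
    · funext i
      simp [proj, i.2]

lemma proj_image_mem_cellsOn {P : (i : ι) → Set (Set (E i))} (hP : ∀ i, ∀ s ∈ P i, s.Nonempty)
    {s : Set ((i : ι) → E i)} (hs : s ∈ cells P) (I' : Set ι) :
    proj E I' '' s ∈ cellsOn P I' := by
  obtain ⟨f, hf, rfl⟩ := hs
  exact ⟨f, hf, proj_image_univ_pi I' fun i => hP i _ (hf i)⟩

lemma subset_univ_pi_of_mem_cells {P : (i : ι) → Set (Set (E i))} {𝒳 : (i : ι) → Set (E i)}
    (hP : ∀ i, ⋃₀ P i = 𝒳 i) {s : Set ((i : ι) → E i)} (hs : s ∈ cells P) :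
    s ⊆ pi univ 𝒳 := by
  obtain ⟨f, hf, rfl⟩ := hs
  exact pi_mono fun i _ => hP i ▸ subset_sUnion_of_mem (hf i)

lemma mem_Phi_of_mem_F {F : ((i : ι) → E i) → ((j : κ) → Fu j) → Set ((i : ι) → E i)}
    {Fbar : Set ((i : ι) → E i) → Set ((j : κ) → Fu j) → Set ((i : ι) → E i)}
    (hFbar : ∀ A B, Fset F A B ⊆ Fbar A B) {Xset : Set ((i : ι) → E i)}
    {Uset : Set ((j : κ) → Fu j)} (Iσ : Set ι) (Jσ : Set κ) {s : Set ((i : ι) → E i)}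
    {x x' : (i : ι) → E i} {u : (j : κ) → Fu j} (hxX : x ∈ Xset) (hxs : x ∈ s)
    (hu : u ∈ Uset) (hx' : x' ∈ F x u) :
    x' ∈ Phi E Fu Fbar Xset Uset Iσ Jσ (proj E Iσ '' s) (proj Fu Jσ u) :=
  hFbar _ _ <| mem_biUnion ⟨hxX, x, hxs, rfl⟩ <| mem_biUnion ⟨hu, rfl⟩ hx'

lemma not_proj_image_subset_proj_image_univ_pi {𝒳 : (i : ι) → Set (E i)} {I' : Set ι} {i : ι}
    (hi : i ∈ I') {A : Set ((i : ι) → E i)} {x : (i : ι) → E i} (hxA : x ∈ A) (hxi : x i ∉ 𝒳 i) :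
    ¬proj E I' '' A ⊆ proj E I' '' pi univ 𝒳 := by
  intro hsub
  obtain ⟨z, hz, hzx⟩ := hsub ⟨x, hxA, rfl⟩
  have hzi : z i = x i := congrFun hzx ⟨i, hi⟩
  exact hxi (hzi ▸ hz i trivial)

/-- The successor `x'` of `x` lands in the cell `H x'`: every subsystem sees the projection of
`x'` inside its over-approximation `Φ_σ`, and if `x'` leaves `𝒳`, it does so in a coordinate owned
by some `I_σ^c`, which then reports `Out_σ`. -/
lemma image_deltaConc_subset_deltaC {τ : Type*}
    {F : ((i : ι) → E i) → ((j : κ) → Fu j) → Set ((i : ι) → E i)}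
    {Fbar : Set ((i : ι) → E i) → Set ((j : κ) → Fu j) → Set ((i : ι) → E i)}
    {𝒳 : (i : ι) → Set (E i)} {Uset : Set ((j : κ) → Fu j)}
    {P : (i : ι) → Set (Set (E i))} {V : (j : κ) → Set (Fu j)} {Im Ic : τ → Set ι}
    {Jm : τ → Set κ} {H : ((i : ι) → E i) → Set ((i : ι) → E i)}
    (hFbar : ∀ A B, Fset F A B ⊆ Fbar A B) (hP : ∀ i, IsFinPartition (P i) (𝒳 i))
    (hIc : IsIndexPartition Ic) (hH : ∀ x, x ∈ H x ∧ (H x ∈ cells P ∨ H x = (pi univ 𝒳)ᶜ))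
    {x : (i : ι) → E i} {u : (j : κ) → Fu j}
    (hxu : (deltaC E Fu Fbar (pi univ 𝒳) Uset P V Im Ic Jm (H x) u).Nonempty) :
    H '' deltaConc F Uset x u ⊆ deltaC E Fu Fbar (pi univ 𝒳) Uset P V Im Ic Jm (H x) u := by
  rintro _ ⟨x', ⟨hu, hx'⟩, rfl⟩
  obtain ⟨-, hs, huV, -⟩ := hxu
  have hcell (t) (ht : t ∈ cells P) (σ : τ) :=
    proj_image_mem_cellsOn (fun i => (hP i).2.1) ht (Im σ)
  have hxX : x ∈ pi univ 𝒳 := subset_univ_pi_of_mem_cells (fun i => (hP i).2.2.1) hs (hH x).1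
  have hΦ (σ : τ) := mem_Phi_of_mem_F hFbar (Im σ) (Jm σ) hxX (hH x).1 hu hx'
  have huσ (σ : τ) : proj Fu (Jm σ) u ∈ pi univ (fun j : Jm σ => V j.1) :=
    fun j _ => huV j.1 trivial
  refine ⟨hs, huV, ?_⟩
  rcases (hH x').2 with hs' | hout
  · exact Or.inl ⟨hs', fun σ => ⟨hcell _ hs σ, huσ σ,
      Or.inl ⟨hcell _ hs' σ, _, ⟨x', (hH x').1, rfl⟩, ⟨x', hΦ σ, rfl⟩⟩⟩⟩
  · obtain ⟨i, hi⟩ : ∃ i, x' i ∉ 𝒳 i := by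
      simpa [hout, mem_univ_pi] using (hH x').1
    obtain ⟨σ, hiσ⟩ := mem_iUnion.mp (hIc.1.symm ▸ mem_univ i : i ∈ ⋃ σ, Ic σ)
    exact Or.inr ⟨hout, σ, hcell _ hs σ, huσ σ, Or.inr ⟨rfl, Or.inr <|
      not_proj_image_subset_proj_image_univ_pi hiσ (hΦ σ) hi⟩⟩

end

theorem stmt1_general
    {ι κ τ : Type*}
    (nd : ι → ℕ) (pd : κ → ℕ)
    (𝒳i : (i : ι) → Set (Vec (nd i))) (𝒰j : (j : κ) → Set (Vec (pd j)))
    (F : ((i : ι) → Vec (nd i)) → ((j : κ) → Vec (pd j)) → Set ((i : ι) → Vec (nd i)))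
    (Fbar : Set ((i : ι) → Vec (nd i)) → Set ((j : κ) → Vec (pd j)) →
      Set ((i : ι) → Vec (nd i)))
    (P : (i : ι) → Set (Set (Vec (nd i)))) (V : (j : κ) → Set (Vec (pd j)))
    (Im Ic : τ → Set ι) (Jm : τ → Set κ)
    (hF : ∀ x u, u ∈ Set.pi Set.univ 𝒰j → (F x u).Nonempty)
    (hFbar : ∀ A B, Fset F A B ⊆ Fbar A B)
    (hP : ∀ i, IsFinPartition (P i) (𝒳i i))
    (hV : ∀ j, (V j).Finite ∧ V j ⊆ 𝒰j j)
    (hIc : IsIndexPartition Ic)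
    (H : ((i : ι) → Vec (nd i)) → Set ((i : ι) → Vec (nd i)))
    (hH : ∀ x, x ∈ H x ∧ (H x ∈ cells P ∨ H x = (Set.pi Set.univ 𝒳i)ᶜ)) :
    IsFeedbackRefinement (deltaConc F (Set.pi Set.univ 𝒰j)) (deltaC (fun i => Vec (nd i)) (fun j => Vec (pd j)) Fbar (Set.pi Set.univ 𝒳i) (Set.pi Set.univ 𝒰j) P V Im Ic Jm) H := by
  intro x
  refine ⟨fun u hxu => ?_, fun u hxu => image_deltaConc_subset_deltaC hFbar hP hIc hH hxu⟩
  obtain ⟨-, -, huV, -⟩ := hxu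
  have hu : u ∈ pi univ 𝒰j := fun j _ => (hV j).2 (huV j trivial)
  obtain ⟨x', hx'⟩ := hF x u hu
  exact ⟨x', hu, hx'⟩

theorem stmt1
    {ι κ τ : Type*} [Finite ι] [Finite κ] [Finite τ]
    (nd : ι → ℕ) (pd : κ → ℕ)
    (𝒳i : (i : ι) → Set (Vec (nd i))) (𝒰j : (j : κ) → Set (Vec (pd j)))
    (F : ((i : ι) → Vec (nd i)) → ((j : κ) → Vec (pd j)) → Set ((i : ι) → Vec (nd i)))
    (Fbar : Set ((i : ι) → Vec (nd i)) → Set ((j : κ) → Vec (pd j)) →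
      Set ((i : ι) → Vec (nd i)))
    (P : (i : ι) → Set (Set (Vec (nd i)))) (V : (j : κ) → Set (Vec (pd j)))
    (Im Ic : τ → Set ι) (Jm : τ → Set κ)
    (hF : ∀ x u, u ∈ Set.pi Set.univ 𝒰j → (F x u).Nonempty)
    (hFbar : ∀ A B, Fset F A B ⊆ Fbar A B)
    (hP : ∀ i, IsFinPartition (P i) (𝒳i i))
    (hV : ∀ j, (V j).Finite ∧ V j ⊆ 𝒰j j)
    (hIc : IsIndexPartition Ic) (hIcne : ∀ σ, (Ic σ).Nonempty) (hIcIm : ∀ σ, Ic σ ⊆ Im σ)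
    (hJ : IsIndexPartition Jm) (hJne : ∀ σ, (Jm σ).Nonempty)
    (H : ((i : ι) → Vec (nd i)) → Set ((i : ι) → Vec (nd i)))
    (hH : ∀ x, x ∈ H x ∧ (H x ∈ cells P ∨ H x = (Set.pi Set.univ 𝒳i)ᶜ)) :
    IsFeedbackRefinement (deltaConc F (Set.pi Set.univ 𝒰j)) (deltaC (fun i => Vec (nd i)) (fun j => Vec (pd j)) Fbar (Set.pi Set.univ 𝒳i) (Set.pi Set.univ 𝒰j) P V Im Ic Jm) H :=
  stmt1_general nd pd 𝒳i 𝒰j F Fbar P V Im Ic Jm hF hFbar hP hV hIc H hH
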